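/- arXiv:2006.04040 — 6 statements merged into one kernel-verified Lean document; each statement's English description precedes it below -/
import Mathlib

section
/- Let R : Fin 4 → Fin 4 → Fin 4 → Fin 4 → ℝ be a curvature-type tensor, F : Fin 4 → Fin 4 → ℝ antisymmetric, and define R'^d_{cab} = R^d_{cab} + δ^d_c F_{ab}. Let g be a symmetric invertible 4×4 real matrix with inverse entries g^{ab}. Define the Hilbert tensor τ_{ab} = ½( ∑_{d,c,r} g_{bd} g^{rc} R^d_{car} + ∑_r R^r_{bra} ) - ½ R g_{ab}, where R = ∑_{a,b,c} g^{ab} R^c_{acb} is the scalar curvature, and define τ'_{ab} analogously from R'. Then τ'_{ab} = τ_{ab} for all a, b. -/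
/-!
Under `R ↦ R + δ ⊗ F` the first trace `R_b{}^r{}_{ar}` gains `δ_b{}^r F_{ar} = F_{ab}`, the second
trace `R^r{}_{bra}` gains `F_{ba} = -F_{ab}`, and the scalar curvature gains `g^{ab} F_{ab}`, which
vanishes because a symmetric tensor contracted with an antisymmetric one is zero.
-/

open Finset

theorem sum_sum_mul_eq_zero_of_symm_of_antisymm {ι K : Type*} [Fintype ι] [CommRing K]
    [IsAddTorsionFree K] {S A : ι → ι → K}
    (hS : ∀ a b, S a b = S b a) (hA : ∀ a b, A a b = -A b a) :
    ∑ a, ∑ b, S a b * A a b = 0 := by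
  refine self_eq_neg.mp ?_
  calc ∑ a, ∑ b, S a b * A a b = ∑ b, ∑ a, S a b * A a b := sum_comm
    _ = ∑ b, ∑ a, -(S b a * A b a) := by
      refine sum_congr rfl fun b _ => sum_congr rfl fun a _ => ?_
      rw [hS, hA, mul_neg]
    _ = -∑ a, ∑ b, S a b * A a b := by simp only [sum_neg_distrib]

namespace ProjectiveChange

variable {ι K : Type*} [Fintype ι] [DecidableEq ι] [Field K]

/-- `R d c a b` stands for `R^d{}_{cab}`. -/
def projectiveChange (R : ι → ι → ι → ι → K) (F : ι → ι → K) : ι → ι → ι → ι → K :=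
  fun d c a b => R d c a b + (if d = c then 1 else 0) * F a b

def scalarCurvature (ginv : ι → ι → K) (R : ι → ι → ι → ι → K) : K :=
  ∑ a, ∑ b, ∑ c, ginv a b * R c a c b

def hilbertTensor (g ginv : ι → ι → K) (R : ι → ι → ι → ι → K) (a b : ι) : K :=
  1/2 * ((∑ d, ∑ c, ∑ r, g b d * ginv r c * R d c a r) + ∑ r, R r b r a)
    - 1/2 * scalarCurvature ginv R * g a b

variable {R : ι → ι → ι → ι → K} {F g ginv : ι → ι → K}

theorem scalarCurvature_projectiveChange :
    scalarCurvature ginv (projectiveChange R F) =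
      scalarCurvature ginv R + ∑ a, ∑ b, ginv a b * F a b := by
  simp [scalarCurvature, projectiveChange, mul_add, sum_add_distrib, ite_mul]

theorem scalarCurvature_projectiveChange_of_antisymm [CharZero K]
    (hginv : ∀ a b, ginv a b = ginv b a) (hF : ∀ a b, F a b = -F b a) :
    scalarCurvature ginv (projectiveChange R F) = scalarCurvature ginv R := by
  rw [scalarCurvature_projectiveChange, sum_sum_mul_eq_zero_of_symm_of_antisymm hginv hF,
    add_zero]

theorem sum_metric_contraction_projectiveChange (a b : ι) :
    ∑ d, ∑ c, ∑ r, g b d * ginv r c * projectiveChange R F d c a r =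
      ∑ d, ∑ c, ∑ r, g b d * ginv r c * R d c a r +
        ∑ r, (∑ d, g b d * ginv r d) * F a r := by
  have hcollapse : ∀ d, ∑ c, ∑ r, g b d * ginv r c * ((if d = c then 1 else 0) * F a r) =
      ∑ r, g b d * ginv r d * F a r := by
    intro d
    simp [mul_ite]
  simp only [projectiveChange, mul_add, sum_add_distrib, hcollapse, sum_mul, add_right_inj]
  exact sum_comm

theorem sum_metric_contraction_projectiveChange_of_inverse
    (hginv : ∀ a b, ginv a b = ginv b a)
    (hinv : ∀ a b, ∑ c, g a c * ginv c b = if a = b then 1 else 0) (a b : ι) :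
    ∑ d, ∑ c, ∑ r, g b d * ginv r c * projectiveChange R F d c a r =
      ∑ d, ∑ c, ∑ r, g b d * ginv r c * R d c a r + F a b := by
  have hdelta : ∀ r, ∑ d, g b d * ginv r d = if b = r then 1 else 0 := fun r => by
    simpa only [hginv r] using hinv b r
  simp [sum_metric_contraction_projectiveChange, hdelta, ite_mul]

theorem sum_trace_projectiveChange (a b : ι) :
    ∑ r, projectiveChange R F r b r a = ∑ r, R r b r a + F b a := by
  simp [projectiveChange, sum_add_distrib, ite_mul]

theorem hilbertTensor_projectiveChange [CharZero K]
    (hF : ∀ a b, F a b = -F b a) (hginv : ∀ a b, ginv a b = ginv b a)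
    (hinv : ∀ a b, ∑ c, g a c * ginv c b = if a = b then 1 else 0) (a b : ι) :
    hilbertTensor g ginv (projectiveChange R F) a b = hilbertTensor g ginv R a b := by
  rw [hilbertTensor, hilbertTensor, scalarCurvature_projectiveChange_of_antisymm hginv hF,
    sum_metric_contraction_projectiveChange_of_inverse hginv hinv, sum_trace_projectiveChange,
    hF b a]
  ring

end ProjectiveChange

open ProjectiveChange in
theorem projective_invariance_hilbert_tensor_general
    (R : Fin 4 → Fin 4 → Fin 4 → Fin 4 → ℝ)
    (F : Fin 4 → Fin 4 → ℝ) (hF : ∀ a b, F a b = - F b a)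
    (R' : Fin 4 → Fin 4 → Fin 4 → Fin 4 → ℝ)
    (hR' : ∀ d c a b, R' d c a b = R d c a b + (if d = c then (1:ℝ) else 0) * F a b)
    (g ginv : Fin 4 → Fin 4 → ℝ)
    (hginv : ∀ a b, ginv a b = ginv b a)
    (hinv : ∀ a b, ∑ c, g a c * ginv c b = if a = b then (1:ℝ) else 0)
    (scal scal' : ℝ)
    (hscal : scal = ∑ a, ∑ b, ∑ c, ginv a b * R c a c b)
    (hscal' : scal' = ∑ a, ∑ b, ∑ c, ginv a b * R' c a c b)
    (τ τ' : Fin 4 → Fin 4 → ℝ)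
    (hτ : ∀ a b, τ a b =
      1/2 * ((∑ d, ∑ c, ∑ r, g b d * ginv r c * R d c a r) + ∑ r, R r b r a)
        - 1/2 * scal * g a b)
    (hτ' : ∀ a b, τ' a b =
      1/2 * ((∑ d, ∑ c, ∑ r, g b d * ginv r c * R' d c a r) + ∑ r, R' r b r a)
        - 1/2 * scal' * g a b) :
    ∀ a b, τ' a b = τ a b := by
  obtain rfl : R' = projectiveChange R F := funext fun d => funext fun c => funext fun a => funext (hR' d c a)
  intro a b
  rw [hτ', hτ, hscal', hscal]
  exact hilbertTensor_projectiveChange hF hginv hinv a b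

/-- Projective invariance of the Hilbert tensor
`τ_{ab} = ½(R_b{}^r{}_{ar} + R^r{}_{bra}) - ½ R g_{ab}` under
`R'^d_{cab} = R^d_{cab} + δ^d_c F_{ab}` with `F` antisymmetric. -/
theorem projective_invariance_hilbert_tensor
    (R : Fin 4 → Fin 4 → Fin 4 → Fin 4 → ℝ)
    (F : Fin 4 → Fin 4 → ℝ) (hF : ∀ a b, F a b = - F b a)
    (R' : Fin 4 → Fin 4 → Fin 4 → Fin 4 → ℝ)
    (hR' : ∀ d c a b, R' d c a b = R d c a b + (if d = c then (1:ℝ) else 0) * F a b)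
    (g ginv : Fin 4 → Fin 4 → ℝ)
    (hg : ∀ a b, g a b = g b a)
    (hginv : ∀ a b, ginv a b = ginv b a)
    (hinv : ∀ a b, ∑ c, g a c * ginv c b = if a = b then (1:ℝ) else 0)
    (scal scal' : ℝ)
    (hscal : scal = ∑ a, ∑ b, ∑ c, ginv a b * R c a c b)
    (hscal' : scal' = ∑ a, ∑ b, ∑ c, ginv a b * R' c a c b)
    (τ τ' : Fin 4 → Fin 4 → ℝ)
    (hτ : ∀ a b, τ a b =
      1/2 * ((∑ d, ∑ c, ∑ r, g b d * ginv r c * R d c a r) + ∑ r, R r b r a)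
        - 1/2 * scal * g a b)
    (hτ' : ∀ a b, τ' a b =
      1/2 * ((∑ d, ∑ c, ∑ r, g b d * ginv r c * R' d c a r) + ∑ r, R' r b r a)
        - 1/2 * scal' * g a b) :
    ∀ a b, τ' a b = τ a b :=
  projective_invariance_hilbert_tensor_general R F hF R' hR' g ginv hginv hinv scal scal' hscal
    hscal' τ τ' hτ hτ'
end

section
/- Let g be a symmetric invertible 4×4 real matrix with inverse entries g^{ab}. Let T : Fin 4 → Fin 4 → Fin 4 → ℝ be antisymmetric in its last two indices (T^a_{bc} = -T^a_{cb}), let 𝒢 : Fin 4 → Fin 4 → Fin 4 → ℝ be symmetric in its first two indices, and let A : Fin 4 → Fin 4 → Fin 4 → ℝ be symmetric in its first two indices (A_{abc} = A_{bac}; the third index is the 1-form index). Write A^a_{bc} = ∑_d g^{ad} A_{dbc} and 𝒢^a_{bc} = ∑_d g^{ad} 𝒢_{dbc}. Define the amplified-transformed quantities T'^a_{bc} = T^a_{bc} + A^a_{cb} - A^a_{bc} and 𝒢'_{abc} = 𝒢_{abc} - 2 A_{abc}. Then the canonical torsion T^a_{bc} - ½(𝒢^a_{bc} - 𝒢^a_{cb})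 is invariant: T'^a_{bc} - ½(𝒢'^a_{bc} - 𝒢'^a_{cb}) = T^a_{bc} - ½(𝒢^a_{bc} - 𝒢^a_{cb}) for all indices, and consequently its trace ∑_a [ T^a_{ac} - ½(𝒢^a_{ac} - 𝒢^a_{ca}) ] is invariant as well. -/
open Finset

section IndexCalculus

variable {ι K : Type*}

def raiseFirst [Fintype ι] [CommRing K] (ginv : ι → ι → K) (X : ι → ι → ι → K) :
    ι → ι → ι → K :=
  fun a b c => ∑ d, ginv a d * X d b c

theorem raiseFirst_sub_two_mul [Fintype ι] [CommRing K] (ginv : ι → ι → K)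
    (X Y : ι → ι → ι → K) :
    raiseFirst ginv (fun a b c => X a b c - 2 * Y a b c)
      = fun a b c => raiseFirst ginv X a b c - 2 * raiseFirst ginv Y a b c := by
  funext a b c
  simp only [raiseFirst, mul_sum, ← sum_sub_distrib, mul_sub, mul_left_comm]

/-- `T^a_{bc} - 𝒢^a_{[bc]}`, where `Gup` is the non-metricity with its first index raised. -/
def canonicalTorsion [Field K] (T Gup : ι → ι → ι → K) : ι → ι → ι → K :=
  fun a b c => T a b c - 1 / 2 * (Gup a b c - Gup a c b)

/-- The shift `A^a_{cb} - A^a_{bc}` of the torsion is exactly cancelled by the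
antisymmetrised shift `-2 A^a_{[bc]}` of the non-metricity. -/
theorem canonicalTorsion_amplified [Field K] [NeZero (2 : K)] (T Gup Aup : ι → ι → ι → K) :
    canonicalTorsion (fun a b c => T a b c + Aup a c b - Aup a b c)
        (fun a b c => Gup a b c - 2 * Aup a b c)
      = canonicalTorsion T Gup := by
  funext a b c
  simp only [canonicalTorsion]
  field_simp
  ring

end IndexCalculus

theorem canonical_torsion_amplified_invariant_general
    (ginv : Fin 4 → Fin 4 → ℝ)
    (T : Fin 4 → Fin 4 → Fin 4 → ℝ)
    (𝒢 : Fin 4 → Fin 4 → Fin 4 → ℝ)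
    (A : Fin 4 → Fin 4 → Fin 4 → ℝ)
    (Aup : Fin 4 → Fin 4 → Fin 4 → ℝ)
    (hAup : ∀ a b c, Aup a b c = ∑ d, ginv a d * A d b c)
    (𝒢up : Fin 4 → Fin 4 → Fin 4 → ℝ)
    (h𝒢up : ∀ a b c, 𝒢up a b c = ∑ d, ginv a d * 𝒢 d b c)
    (T' : Fin 4 → Fin 4 → Fin 4 → ℝ)
    (hT' : ∀ a b c, T' a b c = T a b c + Aup a c b - Aup a b c)
    (𝒢' : Fin 4 → Fin 4 → Fin 4 → ℝ)
    (h𝒢' : ∀ a b c, 𝒢' a b c = 𝒢 a b c - 2 * A a b c)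
    (𝒢'up : Fin 4 → Fin 4 → Fin 4 → ℝ)
    (h𝒢'up : ∀ a b c, 𝒢'up a b c = ∑ d, ginv a d * 𝒢' d b c) :
    (∀ a b c,
      T' a b c - 1/2 * (𝒢'up a b c - 𝒢'up a c b)
        = T a b c - 1/2 * (𝒢up a b c - 𝒢up a c b)) ∧
    (∀ c,
      (∑ a, (T' a a c - 1/2 * (𝒢'up a a c - 𝒢'up a c a)))
        = ∑ a, (T a a c - 1/2 * (𝒢up a a c - 𝒢up a c a))) := by
  have hAup : Aup = raiseFirst ginv A := funext₃ hAup
  have h𝒢up : 𝒢up = raiseFirst ginv 𝒢 := funext₃ h𝒢up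
  have hT' : T' = fun a b c => T a b c + Aup a c b - Aup a b c := funext₃ hT'
  have h𝒢'up : 𝒢'up = fun a b c => 𝒢up a b c - 2 * Aup a b c := by
    rw [hAup, h𝒢up, ← raiseFirst_sub_two_mul, ← funext₃ h𝒢']
    exact funext₃ h𝒢'up
  have invariant : canonicalTorsion T' 𝒢'up = canonicalTorsion T 𝒢up := by
    rw [hT', h𝒢'up, canonicalTorsion_amplified]
  have pointwise : ∀ a b c, canonicalTorsion T' 𝒢'up a b c = canonicalTorsion T 𝒢up a b c :=
    fun a b c => by rw [invariant]
  exact ⟨pointwise, fun c => sum_congr rfl fun a _ => pointwise a a c⟩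

/-- Invariance of the canonical torsion `T^a_{bc} - 𝒢^a_{[bc]}` and of its trace under
the amplified transformation `T'^a_{bc} = T^a_{bc} + A^a_{cb} - A^a_{bc}`,
`𝒢'_{abc} = 𝒢_{abc} - 2 A_{abc}` with `A` symmetric in its first two indices. -/
theorem canonical_torsion_amplified_invariant
    (g ginv : Fin 4 → Fin 4 → ℝ)
    (hg : ∀ a b, g a b = g b a)
    (hinv : ∀ a b, ∑ c, g a c * ginv c b = if a = b then (1:ℝ) else 0)
    (hinv' : ∀ a b, ∑ c, ginv a c * g c b = if a = b then (1:ℝ) else 0)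
    (T : Fin 4 → Fin 4 → Fin 4 → ℝ)
    (hT : ∀ a b c, T a b c = - T a c b)
    (𝒢 : Fin 4 → Fin 4 → Fin 4 → ℝ)
    (h𝒢 : ∀ a b c, 𝒢 a b c = 𝒢 b a c)
    (A : Fin 4 → Fin 4 → Fin 4 → ℝ)
    (hA : ∀ a b c, A a b c = A b a c)
    (Aup : Fin 4 → Fin 4 → Fin 4 → ℝ)
    (hAup : ∀ a b c, Aup a b c = ∑ d, ginv a d * A d b c)
    (𝒢up : Fin 4 → Fin 4 → Fin 4 → ℝ)
    (h𝒢up : ∀ a b c, 𝒢up a b c = ∑ d, ginv a d * 𝒢 d b c)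
    (T' : Fin 4 → Fin 4 → Fin 4 → ℝ)
    (hT' : ∀ a b c, T' a b c = T a b c + Aup a c b - Aup a b c)
    (𝒢' : Fin 4 → Fin 4 → Fin 4 → ℝ)
    (h𝒢' : ∀ a b c, 𝒢' a b c = 𝒢 a b c - 2 * A a b c)
    (𝒢'up : Fin 4 → Fin 4 → Fin 4 → ℝ)
    (h𝒢'up : ∀ a b c, 𝒢'up a b c = ∑ d, ginv a d * 𝒢' d b c) :
    (∀ a b c,
      T' a b c - 1/2 * (𝒢'up a b c - 𝒢'up a c b)
        = T a b c - 1/2 * (𝒢up a b c - 𝒢up a c b)) ∧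
    (∀ c,
      (∑ a, (T' a a c - 1/2 * (𝒢'up a a c - 𝒢'up a c a)))
        = ∑ a, (T a a c - 1/2 * (𝒢up a a c - 𝒢up a c a))) :=
  canonical_torsion_amplified_invariant_general ginv T 𝒢 A Aup hAup 𝒢up h𝒢up T' hT' 𝒢' h𝒢' 𝒢'up
    h𝒢'up
end

section
/- Let n be a positive natural number, let η be a symmetric n×n real matrix, let H : ℝ → Matrix (Fin n) (Fin n) ℝ be differentiable with H(t)ᵀ · η · H(t) constant in t, and let ω : ℝ → Matrix (Fin n) (Fin n) ℝ be any matrix-valued function. Define ω̄(t) = H(t)ᵀ · η · H'(t) + H(t)ᵀ · ω(t) · H(t). Then for every t, ω̄(t) + ω̄(t)ᵀ = H(t)ᵀ · (ω(t) + ω(t)ᵀ) · H(t); that is, the symmetric part of ω̄ is the Hᵀ(·)H-transform of the symmetric part of ω. -/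
/-!
Differentiating the constant matrix `Hᵀ η H` gives `H'ᵀ η H + Hᵀ η H' = 0`; for symmetric `η`
this is the symmetric part of the inhomogeneous term `Hᵀ η H'`, so only the homogeneous term
`Hᵀ ω H` contributes to the symmetric part of `ω̄`.
-/

open Matrix

namespace Matrix

section Calculus

variable {𝕜 : Type*} [NontriviallyNormedField 𝕜] {l m n : Type*} {x : 𝕜}

theorem hasDerivAt_transpose_apply {A : 𝕜 → Matrix m n 𝕜} {A' : Matrix m n 𝕜}
    (hA : ∀ i j, HasDerivAt (fun s => A s i j) (A' i j) x) (i : n) (j : m) :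
    HasDerivAt (fun s => (A s)ᵀ i j) (A'ᵀ i j) x :=
  hA j i

theorem hasDerivAt_mul_const_apply [Fintype m] {A : 𝕜 → Matrix l m 𝕜} {A' : Matrix l m 𝕜}
    (hA : ∀ i j, HasDerivAt (fun s => A s i j) (A' i j) x) (C : Matrix m n 𝕜) (i : l) (j : n) :
    HasDerivAt (fun s => (A s * C) i j) ((A' * C) i j) x := by
  simp only [mul_apply]
  exact HasDerivAt.fun_sum fun k _ => (hA i k).mul_const (C k j)

theorem hasDerivAt_mul_apply [Fintype m] {A : 𝕜 → Matrix l m 𝕜} {B : 𝕜 → Matrix m n 𝕜}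
    {A' : Matrix l m 𝕜} {B' : Matrix m n 𝕜}
    (hA : ∀ i j, HasDerivAt (fun s => A s i j) (A' i j) x)
    (hB : ∀ i j, HasDerivAt (fun s => B s i j) (B' i j) x) (i : l) (j : n) :
    HasDerivAt (fun s => (A s * B s) i j) ((A' * B x + A x * B') i j) x := by
  simp only [mul_apply, add_apply, ← Finset.sum_add_distrib]
  exact HasDerivAt.fun_sum fun k _ => (hA i k).mul (hB k j)

theorem eq_zero_of_hasDerivAt_apply_of_forall_eq {M : 𝕜 → Matrix m n 𝕜} {M' : Matrix m n 𝕜}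
    (hM : ∀ i j, HasDerivAt (fun s => M s i j) (M' i j) x) (hconst : ∀ s, M s = M x) :
    M' = 0 := by
  ext i j
  refine (hM i j).unique ?_
  simp_rw [hconst]
  exact hasDerivAt_const x _

theorem transpose_mul_mul_add_eq_zero_of_hasDerivAt [Fintype m] {H : 𝕜 → Matrix m n 𝕜}
    {H' : Matrix m n 𝕜} {η : Matrix m m 𝕜} (hH : ∀ i j, HasDerivAt (fun s => H s i j) (H' i j) x)
    (hconst : ∀ s, (H s)ᵀ * η * H s = (H x)ᵀ * η * H x) :
    H'ᵀ * η * H x + (H x)ᵀ * η * H' = 0 := by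
  have hHη : ∀ i j, HasDerivAt (fun s => ((H s)ᵀ * η) i j) ((H'ᵀ * η) i j) x :=
    hasDerivAt_mul_const_apply (hasDerivAt_transpose_apply hH) η
  exact eq_zero_of_hasDerivAt_apply_of_forall_eq (hasDerivAt_mul_apply hHη hH) hconst

end Calculus

section Algebra

variable {R : Type*} [CommSemiring R] {m n : Type*} [Fintype m]

theorem transpose_mul_mul_add_transpose (H : Matrix m n R) (ω : Matrix m m R) :
    Hᵀ * ω * H + (Hᵀ * ω * H)ᵀ = Hᵀ * (ω + ωᵀ) * H := by
  simp only [transpose_mul, transpose_transpose, Matrix.mul_add, Matrix.add_mul, Matrix.mul_assoc]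

theorem transpose_mul_mul_add_transpose_of_isSymm (H H' : Matrix m n R) {η : Matrix m m R}
    (hη : η.IsSymm) :
    Hᵀ * η * H' + (Hᵀ * η * H')ᵀ = H'ᵀ * η * H + Hᵀ * η * H' := by
  rw [add_comm]
  simp only [transpose_mul, transpose_transpose, hη.eq, Matrix.mul_assoc]

end Algebra

end Matrix

theorem symmetric_part_transforms_as_tensor_general
    (n : ℕ)
    (η : Matrix (Fin n) (Fin n) ℝ) (hη : ηᵀ = η)
    (H H' : ℝ → Matrix (Fin n) (Fin n) ℝ)
    (hderiv : ∀ i j t, HasDerivAt (fun s => H s i j) (H' t i j) t)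
    (hconst : ∀ s t, (H s)ᵀ * η * H s = (H t)ᵀ * η * H t)
    (ω : ℝ → Matrix (Fin n) (Fin n) ℝ)
    (ωbar : ℝ → Matrix (Fin n) (Fin n) ℝ)
    (hωbar : ∀ t, ωbar t = (H t)ᵀ * η * H' t + (H t)ᵀ * ω t * H t) :
    ∀ t, ωbar t + (ωbar t)ᵀ = (H t)ᵀ * (ω t + (ω t)ᵀ) * H t := by
  intro t
  have hinvariant : (H' t)ᵀ * η * H t + (H t)ᵀ * η * H' t = 0 :=
    transpose_mul_mul_add_eq_zero_of_hasDerivAt (fun i j => hderiv i j t) (fun s => hconst s t)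
  calc ωbar t + (ωbar t)ᵀ
      = ((H t)ᵀ * η * H' t + ((H t)ᵀ * η * H' t)ᵀ)
          + ((H t)ᵀ * ω t * H t + ((H t)ᵀ * ω t * H t)ᵀ) := by
        rw [hωbar, transpose_add]; abel
    _ = (H t)ᵀ * (ω t + (ω t)ᵀ) * H t := by
        rw [transpose_mul_mul_add_transpose_of_isSymm _ _ hη, hinvariant, zero_add,
          transpose_mul_mul_add_transpose]

/-- The symmetric part of the transformed connection `ω̄ = Hᵀ η H' + Hᵀ ω H`
(with `Hᵀ η H` constant, η symmetric) is the `Hᵀ(·)H`-transform of the symmetric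
part of `ω`. -/
theorem symmetric_part_transforms_as_tensor
    (n : ℕ) (hn : 0 < n)
    (η : Matrix (Fin n) (Fin n) ℝ) (hη : ηᵀ = η)
    (H H' : ℝ → Matrix (Fin n) (Fin n) ℝ)
    (hderiv : ∀ i j t, HasDerivAt (fun s => H s i j) (H' t i j) t)
    (hconst : ∀ s t, (H s)ᵀ * η * H s = (H t)ᵀ * η * H t)
    (ω : ℝ → Matrix (Fin n) (Fin n) ℝ)
    (ωbar : ℝ → Matrix (Fin n) (Fin n) ℝ)
    (hωbar : ∀ t, ωbar t = (H t)ᵀ * η * H' t + (H t)ᵀ * ω t * H t) :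
    ∀ t, ωbar t + (ωbar t)ᵀ = (H t)ᵀ * (ω t + (ω t)ᵀ) * H t :=
  symmetric_part_transforms_as_tensor_general n η hη H H' hderiv hconst ω ωbar hωbar
end

section
/- Let g be a symmetric invertible 4×4 real matrix with entries g_{ab} and inverse entries g^{ab} (also symmetric). Let Š : Fin 4 → Fin 4 → Fin 4 → ℝ and 𝒢̌ : Fin 4 → Fin 4 → Fin 4 → ℝ each be symmetric in their first two indices and g-traceless in their first two indices: Š^{mnh} = Š^{nmh}, ∑_{m,n} g_{mn} Š^{mnh} = 0, 𝒢̌^{abc} = 𝒢̌^{bac}, ∑_{a,b} g_{ab} 𝒢̌^{abc} = 0. Write u^m = ∑_{r,s} 𝒢̌^{mrs} g_{rs} and w^c = ∑_{r,s} Š^{crs} g_{rs}. Then the following are equivalent: (i) for all m, n, h: 2 Š^{mnh} = u^n g^{hm} + u^m g^{hn} - 𝒢̌^{hnm} - 𝒢̌^{hmn}; (ii) for all a, b, c: 𝒢̌^{abc} = - Š^{bca} - Š^{acb} + Š^{bac} + ½ w^c g^{ab}. -/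
/-!
Solving either equation for the other tensor is the usual permutation trick and uses only the
symmetries: (i) is equivalent to `𝒢̌^{abc} = -Š^{bca} - Š^{acb} + Š^{bac} + u^c g^{ab}`. This differs
from (ii) only through the trace term, and the two agree exactly when `n u = 2 w` in dimension `n`.
Contracting the solved form over `a, b` with `g` and using both tracelessness conditions gives
`n u = 2 w`; conversely, contracting (ii) over its last two indices gives `u = (2 / n) w`.
-/

open Finset

variable {ι : Type*} {g ginv : ι → ι → ℝ} {S G : ι → ι → ι → ℝ}

theorem shear_formula_iff (hSsym : ∀ m n h, S m n h = S n m h)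
    (hGsym : ∀ a b c, G a b c = G b a c) (hginv : ∀ a b, ginv a b = ginv b a) (v : ι → ℝ) :
    (∀ m n h, 2 * S m n h = v n * ginv h m + v m * ginv h n - G h n m - G h m n) ↔
      ∀ a b c, G a b c = -S b c a - S a c b + S b a c + v c * ginv a b := by
  constructor
  · intro hS a b c
    linear_combination (1/2) * hS b c a + (1/2) * hS a c b - (1/2) * hS b a c
      - (1/2) * hGsym b a c - (1/2) * hGsym a c b - (1/2) * hGsym b c a
      + (1/2) * v c * hginv b a + (1/2) * v b * hginv a c + (1/2) * v a * hginv b c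
  · intro hG m n h
    linear_combination hG h n m + hG h m n + hSsym m n h - hSsym h m n + hSsym n h m

variable [Fintype ι]

def contractLast (g : ι → ι → ℝ) (T : ι → ι → ι → ℝ) (c : ι) : ℝ :=
  ∑ r, ∑ s, T c r s * g r s

theorem sum_sum_swap_mul_of_symm (hg : ∀ a b, g a b = g b a) (f : ι → ι → ℝ) :
    ∑ r, ∑ s, f s r * g r s = ∑ r, ∑ s, f r s * g r s := by
  rw [sum_comm]
  simp only [hg]

theorem sum_sum_mul_inv_eq_card [DecidableEq ι] (hginv : ∀ a b, ginv a b = ginv b a)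
    (hinv : ∀ a b, ∑ c, g a c * ginv c b = if a = b then 1 else 0) :
    ∑ a, ∑ b, g a b * ginv a b = Fintype.card ι := by
  have hdiag (a : ι) : ∑ b, g a b * ginv a b = 1 := by simpa [hginv a] using hinv a a
  simp [hdiag]

theorem sum_sum_inv_mul_apply [DecidableEq ι] (hg : ∀ a b, g a b = g b a)
    (hginv : ∀ a b, ginv a b = ginv b a)
    (hinv : ∀ a b, ∑ c, g a c * ginv c b = if a = b then 1 else 0) (x : ι → ℝ) (m : ι) :
    ∑ r, ∑ s, x s * ginv m r * g r s = x m := by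
  rw [sum_comm]
  have hcol (s : ι) : ∑ r, x s * ginv m r * g r s = x s * if s = m then 1 else 0 := by
    rw [← hinv s m, mul_sum]
    exact sum_congr rfl fun r _ => by rw [hg r s, hginv m r]; ring
  simp [hcol]

theorem contractLast_eq_of_shear_formula [DecidableEq ι] (hg : ∀ a b, g a b = g b a)
    (hginv : ∀ a b, ginv a b = ginv b a)
    (hinv : ∀ a b, ∑ c, g a c * ginv c b = if a = b then 1 else 0)
    (hSsym : ∀ m n h, S m n h = S n m h) (hStr : ∀ h, ∑ m, ∑ n, g m n * S m n h = 0)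
    {v : ι → ℝ} (hG : ∀ a b c, G a b c = -S b c a - S a c b + S b a c + v c * ginv a b) :
    contractLast g G = v := by
  funext m
  have htr : ∑ r, ∑ s, S r s m * g r s = 0 := by simpa only [mul_comm] using hStr m
  have hswap : ∑ r, ∑ s, S m s r * g r s = contractLast g S m :=
    sum_sum_swap_mul_of_symm hg (S m)
  have hsym : ∑ r, ∑ s, S r m s * g r s = contractLast g S m := by
    simp only [contractLast, hSsym _ m]
  simp only [contractLast, hG, add_mul, sub_mul, neg_mul, sum_add_distrib, sum_sub_distrib,
    sum_neg_distrib] at hswap hsym ⊢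
  rw [htr, hswap, hsym, sum_sum_inv_mul_apply hg hginv hinv]
  ring

theorem card_mul_eq_of_shear_formula [DecidableEq ι] (hg : ∀ a b, g a b = g b a)
    (hginv : ∀ a b, ginv a b = ginv b a)
    (hinv : ∀ a b, ∑ c, g a c * ginv c b = if a = b then 1 else 0)
    (hSsym : ∀ m n h, S m n h = S n m h) (hStr : ∀ h, ∑ m, ∑ n, g m n * S m n h = 0)
    (hGtr : ∀ c, ∑ a, ∑ b, g a b * G a b c = 0)
    {v : ι → ℝ} (hG : ∀ a b c, G a b c = -S b c a - S a c b + S b a c + v c * ginv a b)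
    (c : ι) : Fintype.card ι * v c = 2 * contractLast g S c := by
  have hfirst : ∑ a, ∑ b, g a b * S b c a = contractLast g S c := by
    rw [contractLast, ← sum_sum_swap_mul_of_symm hg (S c)]
    simp only [hSsym _ c, mul_comm]
  have hsecond : ∑ a, ∑ b, g a b * S a c b = contractLast g S c := by
    simp only [contractLast, hSsym _ c, mul_comm]
  have htr : ∑ a, ∑ b, g a b * S b a c = 0 := by
    rw [sum_comm, ← hStr c]
    simp only [hg]
  have hcard := sum_sum_mul_inv_eq_card hginv hinv
  have hzero := hGtr c
  simp only [hG, mul_add, mul_sub, mul_neg, sum_add_distrib, sum_sub_distrib, sum_neg_distrib,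
    mul_left_comm _ (v c), ← mul_sum] at hzero
  rw [hfirst, hsecond, htr, hcard] at hzero
  linarith

theorem shear_equation_iff [DecidableEq ι] [Nonempty ι] (hg : ∀ a b, g a b = g b a)
    (hginv : ∀ a b, ginv a b = ginv b a)
    (hinv : ∀ a b, ∑ c, g a c * ginv c b = if a = b then 1 else 0)
    (hSsym : ∀ m n h, S m n h = S n m h) (hStr : ∀ h, ∑ m, ∑ n, g m n * S m n h = 0)
    (hGsym : ∀ a b c, G a b c = G b a c) (hGtr : ∀ c, ∑ a, ∑ b, g a b * G a b c = 0) :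
    (∀ m n h, 2 * S m n h = contractLast g G n * ginv h m + contractLast g G m * ginv h n
        - G h n m - G h m n) ↔
      ∀ a b c, G a b c = -S b c a - S a c b + S b a c
        + 2 / Fintype.card ι * contractLast g S c * ginv a b := by
  rw [shear_formula_iff hSsym hGsym hginv]
  have hcard : (Fintype.card ι : ℝ) ≠ 0 := by positivity
  constructor
  · intro hG a b c
    have hv : contractLast g G c = 2 / Fintype.card ι * contractLast g S c := by
      rw [div_mul_eq_mul_div, eq_div_iff hcard, mul_comm]
      exact card_mul_eq_of_shear_formula hg hginv hinv hSsym hStr hGtr hG c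
    rw [hG, hv]
  · intro hG
    rwa [contractLast_eq_of_shear_formula hg hginv hinv hSsym hStr hG]

/-- Equivalence of the two forms of the dynamical equation relating shear
hypermomentum `Š^{mnh}` and shear non-metricity `𝒢̌^{abc}` (both symmetric and
g-traceless in their first two indices). -/
theorem shear_equation_equivalence
    (g ginv : Fin 4 → Fin 4 → ℝ)
    (hg : ∀ a b, g a b = g b a)
    (hginv : ∀ a b, ginv a b = ginv b a)
    (hinv : ∀ a b, ∑ c, g a c * ginv c b = if a = b then (1:ℝ) else 0)
    (S G : Fin 4 → Fin 4 → Fin 4 → ℝ)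
    (hSsym : ∀ m n h, S m n h = S n m h)
    (hStr : ∀ h, ∑ m, ∑ n, g m n * S m n h = 0)
    (hGsym : ∀ a b c, G a b c = G b a c)
    (hGtr : ∀ c, ∑ a, ∑ b, g a b * G a b c = 0)
    (u w : Fin 4 → ℝ)
    (hu : ∀ m, u m = ∑ r, ∑ s, G m r s * g r s)
    (hw : ∀ c, w c = ∑ r, ∑ s, S c r s * g r s) :
    (∀ m n h, 2 * S m n h
        = u n * ginv h m + u m * ginv h n - G h n m - G h m n) ↔
    (∀ a b c, G a b c
        = - S b c a - S a c b + S b a c + 1/2 * w c * ginv a b) := by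
  obtain rfl : u = contractLast g G := funext hu
  obtain rfl : w = contractLast g S := funext hw
  have h := shear_equation_iff hg hginv hinv hSsym hStr hGsym hGtr
  rwa [Fintype.card_fin, Nat.cast_ofNat, show (2 : ℝ) / 4 = 1 / 2 by norm_num] at h
end

section
/- Let g be a symmetric invertible 4×4 real matrix with inverse entries g^{ab}, and let Š : Fin 4 → Fin 4 → Fin 4 → ℝ be symmetric and g-traceless in its first two indices (Š^{mnh} = Š^{nmh} and ∑ g_{mn} Š^{mnh} = 0). Define 𝒢̌^{abc} = - Š^{bca} - Š^{acb} + Š^{bac} + ½ (∑_{r,s} Š^{crs} g_{rs}) g^{ab}. Then 𝒢̌^{abc} = 0 for all a, b, c if and only if Š^{abc} = 0 for all a, b, c. -/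
/-!
Adding the vanishing conditions for `𝒢̌` at the cyclic permutations `(b, c, a)` and `(c, a, b)`
and using the symmetry of `Š` expresses `Š` through its trace `T^c = Š^{cr}{}_r`:
`Š^{abc} = ¼ (T^a g^{bc} + T^b g^{ca})`. Contracting with `g_{ab}` gives `0 = ½ T^c` by
tracelessness, so `T`, and with it `Š`, vanishes.
-/

open Finset

section

variable {K ι : Type*} [Field K]

theorem shear_eq_of_nonmetricity_eq_zero [CharZero K] {S : ι → ι → ι → K} (T : ι → K)
    (N : ι → ι → K) (hS : ∀ a b c, S a b c = S b a c)
    (h : ∀ a b c, -S b c a - S a c b + S b a c + 1/2 * T c * N a b = 0) (a b c : ι) :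
    S a b c = 1/4 * (T a * N b c + T b * N c a) := by
  linear_combination (-1/2 : K) * (h b c a + h c a b) + (1/2 : K) * (hS a b c + hS a c b)

variable [Fintype ι] [DecidableEq ι] {g N : ι → ι → K}

theorem sum_sum_mul_mul_right_inv
    (hgN : ∀ a b, ∑ c, g a c * N c b = if a = b then 1 else 0) (T : ι → K) (c : ι) :
    ∑ a, ∑ b, g a b * (T a * N b c) = T c := by
  simp_rw [mul_left_comm (g _ _), ← mul_sum, hgN]
  simp

theorem sum_sum_mul_mul_left_inv
    (hNg : ∀ a b, ∑ c, N a c * g c b = if a = b then 1 else 0) (T : ι → K) (c : ι) :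
    ∑ a, ∑ b, g a b * (T b * N c a) = T c := by
  rw [sum_comm]
  simp_rw [mul_left_comm (g _ _), mul_comm (g _ _), ← mul_sum, hNg]
  simp

end

theorem shear_nonmetricity_vanishes_iff_shear_hypermomentum_general
    (g ginv : Fin 4 → Fin 4 → ℝ)
    (hinv : ∀ a b, ∑ c, g a c * ginv c b = if a = b then (1:ℝ) else 0)
    (hinv' : ∀ a b, ∑ c, ginv a c * g c b = if a = b then (1:ℝ) else 0)
    (S : Fin 4 → Fin 4 → Fin 4 → ℝ)
    (hSsym : ∀ m n h, S m n h = S n m h)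
    (hStr : ∀ h, ∑ m, ∑ n, g m n * S m n h = 0)
    (G : Fin 4 → Fin 4 → Fin 4 → ℝ)
    (hG : ∀ a b c, G a b c
      = - S b c a - S a c b + S b a c + 1/2 * (∑ r, ∑ s, S c r s * g r s) * ginv a b) :
    (∀ a b c, G a b c = 0) ↔ (∀ a b c, S a b c = 0) := by
  refine ⟨fun hG0 => ?_, fun hS0 a b c => by simp [hG, hS0]⟩
  set T : Fin 4 → ℝ := fun c => ∑ r, ∑ s, S c r s * g r s
  have hS : ∀ a b c, S a b c = 1/4 * (T a * ginv b c + T b * ginv c a) :=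
    shear_eq_of_nonmetricity_eq_zero T ginv hSsym fun a b c => (hG a b c).symm.trans (hG0 a b c)
  have hT : ∀ c, T c = 0 := fun c => by
    have htr := hStr c
    simp_rw [hS, mul_left_comm (g _ _), ← mul_sum, mul_add, sum_add_distrib,
      sum_sum_mul_mul_right_inv hinv, sum_sum_mul_mul_left_inv hinv'] at htr
    linarith
  intro a b c
  simp [hS, hT]

/-- The source of shear non-metricity is the shear hypermomentum:
with `𝒢̌^{abc} = -Š^{bca} - Š^{acb} + Š^{bac} + ½ Š^{cr}{}_r g^{ab}`,
one has `𝒢̌ = 0 ⟺ Š = 0`. -/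
theorem shear_nonmetricity_vanishes_iff_shear_hypermomentum
    (g ginv : Fin 4 → Fin 4 → ℝ)
    (hg : ∀ a b, g a b = g b a)
    (hinv : ∀ a b, ∑ c, g a c * ginv c b = if a = b then (1:ℝ) else 0)
    (hinv' : ∀ a b, ∑ c, ginv a c * g c b = if a = b then (1:ℝ) else 0)
    (S : Fin 4 → Fin 4 → Fin 4 → ℝ)
    (hSsym : ∀ m n h, S m n h = S n m h)
    (hStr : ∀ h, ∑ m, ∑ n, g m n * S m n h = 0)
    (G : Fin 4 → Fin 4 → Fin 4 → ℝ)
    (hG : ∀ a b c, G a b c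
      = - S b c a - S a c b + S b a c + 1/2 * (∑ r, ∑ s, S c r s * g r s) * ginv a b) :
    (∀ a b c, G a b c = 0) ↔ (∀ a b c, S a b c = 0) :=
  shear_nonmetricity_vanishes_iff_shear_hypermomentum_general g ginv hinv hinv' S hSsym hStr G hG
end

section
/- Let g be a symmetric invertible 4×4 real matrix with entries g_{ab} and inverse entries g^{ab}, and let 𝒢 : Fin 4 → Fin 4 → Fin 4 → ℝ be symmetric in its first two indices. Define the Weyl form 𝒢_c = ∑_{a,b} g^{ab} 𝒢_{abc} and the shear non-metricity 𝒢̌_{abc} = 𝒢_{abc} - ¼ 𝒢_c g_{ab}. With all raised indices obtained by contraction with g^{··} (e.g. 𝒢^{uvz} = ∑ g^{ua} g^{vb} g^{zc} 𝒢_{abc}, and 𝒢^{rs}{}_s = ∑_s of 𝒢 with first two indices raised and second index contracted against the third), the following identity holds: - ¼ ∑ 𝒢^{rs}{}_s 𝒢_r{}^t{}_t + ¼ ∑ 𝒢^{uvz} 𝒢_{uzv} = - ¼ ∑ 𝒢̌^{rs}{}_s 𝒢̌_r{}^t{}_t + ¼ ∑ 𝒢̌^{uvz} 𝒢̌_{uzv}.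 -/
/-- The non-metricity quadratic scalar
`-¼ 𝒢^{rs}{}_s 𝒢_r{}^t{}_t + ¼ 𝒢^{uvz} 𝒢_{uzv}` of the Lagrangian `ℒ_λ`,
where indices are raised with `ginv`. -/
noncomputable def nonmetricityQuad (ginv : Fin 4 → Fin 4 → ℝ)
    (X : Fin 4 → Fin 4 → Fin 4 → ℝ) : ℝ :=
  - 1/4 * ∑ r, (∑ a, ∑ b, ∑ s, ginv r a * ginv s b * X a b s)
      * (∑ t, ∑ c, ginv t c * X r c t)
  + 1/4 * ∑ u, ∑ v, ∑ z,
      (∑ a, ∑ b, ∑ c, ginv u a * ginv v b * ginv z c * X a b c) * X u z v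

/-!
The shear non-metricity is `𝒢 + ω ⊗ g` with `ω_c = -¼ 𝒢_c`, so it suffices that the scalar is
invariant under `X ↦ X + ω_c g_{ab}` for every one-form `ω` (projective invariance). Write the
scalar as `-¼ X^{rs}{}_s X_r{}^t{}_t + ¼ B(X, X)` with `B(X, Y) = X^{uvz} Y_{uzv}`; since `B` is
symmetric, both parts change by twice the cross term plus the `ω`–`ω` term, and for `X` symmetric
in its first two indices these are `ω^r X_r{}^t{}_t` and `ω^r ω_r` in both parts, so the changes
cancel.
-/

open Finset

theorem Finset.sum_comm₃ {α β M : Type*} [Fintype α] [Fintype β] [AddCommMonoid M]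
    (F : α → α → α → β → β → β → M) :
    ∑ u, ∑ v, ∑ z, ∑ a, ∑ b, ∑ c, F u v z a b c = ∑ a, ∑ b, ∑ c, ∑ u, ∑ v, ∑ z, F u v z a b c := by
  simpa only [Fintype.sum_prod_type] using
    sum_comm (s := univ) (t := univ) (f := fun (p : α × α × α) (q : β × β × β) =>
      F p.1 p.2.1 p.2.2 q.1 q.2.1 q.2.2)

variable {ι : Type*} [Fintype ι] {g ginv : ι → ι → ℝ}

/- With `ginv` the inverse metric: `raiseIndex ginv ω r = ω^r`,
`secondTrace ginv X r = X_r{}^t{}_t` and `raiseIndices ginv X u v z = X^{uvz}`. -/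
def raiseIndex (ginv : ι → ι → ℝ) (ω : ι → ℝ) (r : ι) : ℝ := ∑ c, ginv r c * ω c

def secondTrace (ginv : ι → ι → ℝ) (X : ι → ι → ι → ℝ) (r : ι) : ℝ :=
  ∑ t, ∑ c, ginv t c * X r c t

def raiseIndices (ginv : ι → ι → ℝ) (X : ι → ι → ι → ℝ) (u v z : ι) : ℝ :=
  ∑ a, ∑ b, ∑ c, ginv u a * ginv v b * ginv z c * X a b c

theorem raiseIndex_add (ω η : ι → ℝ) (r : ι) :
    raiseIndex ginv (ω + η) r = raiseIndex ginv ω r + raiseIndex ginv η r := by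
  simp only [raiseIndex, Pi.add_apply, mul_add, sum_add_distrib]

theorem secondTrace_add (X Y : ι → ι → ι → ℝ) :
    secondTrace ginv (X + Y) = secondTrace ginv X + secondTrace ginv Y := by
  ext r
  simp only [secondTrace, Pi.add_apply, mul_add, sum_add_distrib]

theorem raiseIndices_add (X Y : ι → ι → ι → ℝ) (u v z : ι) :
    raiseIndices ginv (X + Y) u v z = raiseIndices ginv X u v z + raiseIndices ginv Y u v z := by
  simp only [raiseIndices, Pi.add_apply, mul_add, sum_add_distrib]

theorem sum_raiseIndex_mul_comm (hginv : ∀ a b, ginv a b = ginv b a) (ω η : ι → ℝ) :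
    ∑ r, raiseIndex ginv ω r * η r = ∑ r, raiseIndex ginv η r * ω r := by
  simp only [raiseIndex, sum_mul]
  rw [sum_comm]
  exact sum_congr rfl fun r _ => sum_congr rfl fun c _ => by rw [hginv]; ring

theorem sum_raiseIndices_mul_comm (hginv : ∀ a b, ginv a b = ginv b a) (X Y : ι → ι → ι → ℝ) :
    ∑ u, ∑ v, ∑ z, raiseIndices ginv X u v z * Y u z v
      = ∑ u, ∑ v, ∑ z, raiseIndices ginv Y u v z * X u z v := by
  simp only [raiseIndices, sum_mul]
  rw [sum_comm₃]
  refine sum_congr rfl fun a _ => ?_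
  rw [sum_comm]
  refine sum_congr rfl fun c _ => sum_congr rfl fun b _ => sum_congr rfl fun u _ => ?_
  rw [sum_comm]
  refine sum_congr rfl fun z _ => sum_congr rfl fun v _ => ?_
  rw [hginv u, hginv v, hginv z]
  ring

theorem nonmetricityQuad_eq_contractions (ginv : Fin 4 → Fin 4 → ℝ)
    (X : Fin 4 → Fin 4 → Fin 4 → ℝ) :
    nonmetricityQuad ginv X =
      - 1/4 * ∑ r, raiseIndex ginv (secondTrace ginv X) r * secondTrace ginv X r
      + 1/4 * ∑ u, ∑ v, ∑ z, raiseIndices ginv X u v z * X u z v := by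
  have hup : ∀ r, ∑ a, ∑ b, ∑ s, ginv r a * ginv s b * X a b s
      = raiseIndex ginv (secondTrace ginv X) r := fun r => by
    simp only [raiseIndex, secondTrace, mul_sum, mul_assoc]
    exact sum_congr rfl fun a _ => sum_comm
  simp only [nonmetricityQuad, hup]
  rfl

theorem sum_inv_mul_raiseIndex_mul (hginv : ∀ a b, ginv a b = ginv b a) {Y : ι → ι → ι → ℝ}
    (hY : ∀ a b c, Y a b c = Y b a c) (ω : ι → ℝ) :
    ∑ u, ∑ v, ∑ z, ginv u v * raiseIndex ginv ω z * Y u z v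
      = ∑ r, raiseIndex ginv ω r * secondTrace ginv Y r := by
  rw [sum_comm_cycle]
  refine sum_congr rfl fun z _ => ?_
  simp only [secondTrace, mul_sum]
  rw [sum_comm]
  exact sum_congr rfl fun v _ => sum_congr rfl fun u _ => by rw [hY, hginv]; ring

variable [DecidableEq ι]

theorem rightInverse_symm (hg : ∀ a b, g a b = g b a)
    (hinv : ∀ a b, ∑ c, g a c * ginv c b = if a = b then (1 : ℝ) else 0) (a b : ι) :
    ginv a b = ginv b a := by
  have hmul : Matrix.of g * Matrix.of ginv = 1 := by
    ext a b
    simpa [Matrix.mul_apply, Matrix.one_apply] using hinv a b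
  have hsymm : (Matrix.of g).IsSymm := Matrix.IsSymm.ext fun a b => hg b a
  simpa [Matrix.inv_eq_right_inv hmul] using hsymm.inv.apply b a

theorem sum_inv_mul_metric (hginv : ∀ a b, ginv a b = ginv b a)
    (hinv : ∀ a b, ∑ c, g a c * ginv c b = if a = b then (1 : ℝ) else 0) (t r : ι) :
    ∑ c, ginv t c * g r c = if r = t then 1 else 0 := by
  simp_rw [hginv t, mul_comm (ginv _ t)]
  exact hinv r t

theorem secondTrace_metric (hginv : ∀ a b, ginv a b = ginv b a)
    (hinv : ∀ a b, ∑ c, g a c * ginv c b = if a = b then (1 : ℝ) else 0) (ω : ι → ℝ) :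
    secondTrace ginv (fun a b c => ω c * g a b) = ω := by
  ext r
  simp_rw [secondTrace, mul_left_comm _ (ω _), ← mul_sum, sum_inv_mul_metric hginv hinv,
    mul_ite, mul_one, mul_zero, sum_ite_eq, mem_univ, if_true]

theorem raiseIndices_metric (hginv : ∀ a b, ginv a b = ginv b a)
    (hinv : ∀ a b, ∑ c, g a c * ginv c b = if a = b then (1 : ℝ) else 0) (ω : ι → ℝ)
    (u v z : ι) :
    raiseIndices ginv (fun a b c => ω c * g a b) u v z = ginv u v * raiseIndex ginv ω z := by
  have hsplit : ∀ a b c, ginv u a * ginv v b * ginv z c * (ω c * g a b)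
      = ginv u a * ((ginv v b * g a b) * (ginv z c * ω c)) := fun _ _ _ => by ring
  simp_rw [raiseIndices, hsplit, ← mul_sum, ← sum_mul, sum_inv_mul_metric hginv hinv, ite_mul,
    one_mul, zero_mul, mul_ite, mul_zero, sum_ite_eq', mem_univ, if_true]
  rfl

theorem nonmetricityQuad_add_metric {g ginv : Fin 4 → Fin 4 → ℝ} (hg : ∀ a b, g a b = g b a)
    (hginv : ∀ a b, ginv a b = ginv b a)
    (hinv : ∀ a b, ∑ c, g a c * ginv c b = if a = b then (1 : ℝ) else 0)
    {X : Fin 4 → Fin 4 → Fin 4 → ℝ} (hX : ∀ a b c, X a b c = X b a c) (ω : Fin 4 → ℝ) :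
    nonmetricityQuad ginv (X + fun a b c => ω c * g a b) = nonmetricityQuad ginv X := by
  have hK : ∀ a b c, ω c * g a b = ω c * g b a := fun a b c => by rw [hg]
  rw [nonmetricityQuad_eq_contractions, nonmetricityQuad_eq_contractions, secondTrace_add,
    secondTrace_metric hginv hinv]
  simp only [raiseIndex_add, raiseIndices_add, Pi.add_apply, add_mul, mul_add, sum_add_distrib]
  rw [sum_raiseIndices_mul_comm hginv X fun a b c => ω c * g a b]
  simp only [raiseIndices_metric hginv hinv]
  rw [sum_inv_mul_raiseIndex_mul hginv hX, sum_inv_mul_raiseIndex_mul hginv hK,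
    secondTrace_metric hginv hinv, sum_raiseIndex_mul_comm hginv (secondTrace ginv X) ω]
  ring

theorem nonmetricity_quad_shear_identity_general
    (g ginv : Fin 4 → Fin 4 → ℝ)
    (hg : ∀ a b, g a b = g b a)
    (hinv : ∀ a b, ∑ c, g a c * ginv c b = if a = b then (1:ℝ) else 0)
    (𝒢 : Fin 4 → Fin 4 → Fin 4 → ℝ)
    (h𝒢 : ∀ a b c, 𝒢 a b c = 𝒢 b a c)
    (W : Fin 4 → ℝ)
    (Sh : Fin 4 → Fin 4 → Fin 4 → ℝ)
    (hSh : ∀ a b c, Sh a b c = 𝒢 a b c - 1/4 * W c * g a b) :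
    nonmetricityQuad ginv 𝒢 = nonmetricityQuad ginv Sh := by
  have hShift : Sh = 𝒢 + fun a b c => (-1/4 * W c) * g a b := by
    ext a b c
    simp only [hSh, Pi.add_apply]
    ring
  rw [hShift, nonmetricityQuad_add_metric hg (rightInverse_symm hg hinv) hinv h𝒢]

/-- In the quadratic non-metricity part of `ℒ_λ` the non-metricity `𝒢` can be
replaced by the shear non-metricity `𝒢̌_{abc} = 𝒢_{abc} - ¼ 𝒢_c g_{ab}`. -/
theorem nonmetricity_quad_shear_identity
    (g ginv : Fin 4 → Fin 4 → ℝ)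
    (hg : ∀ a b, g a b = g b a)
    (hinv : ∀ a b, ∑ c, g a c * ginv c b = if a = b then (1:ℝ) else 0)
    (hinv' : ∀ a b, ∑ c, ginv a c * g c b = if a = b then (1:ℝ) else 0)
    (𝒢 : Fin 4 → Fin 4 → Fin 4 → ℝ)
    (h𝒢 : ∀ a b c, 𝒢 a b c = 𝒢 b a c)
    (W : Fin 4 → ℝ)
    (hW : ∀ c, W c = ∑ a, ∑ b, ginv a b * 𝒢 a b c)
    (Sh : Fin 4 → Fin 4 → Fin 4 → ℝ)
    (hSh : ∀ a b c, Sh a b c = 𝒢 a b c - 1/4 * W c * g a b) :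
    nonmetricityQuad ginv 𝒢 = nonmetricityQuad ginv Sh :=
  nonmetricity_quad_shear_identity_general g ginv hg hinv 𝒢 h𝒢 W Sh hSh
end
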